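/- Let D be a maximal ASPD on a finite set A with n = |A| and let V := {{ω(1),…,ω(k)} : ω ∈ D, 1 ≤ k ≤ n} be the regular vine corresponding to D. Then rich(D) = min{k ∈ {1,…,n} : ⋂_{S ∈ V, |S| = k} S ≠ ∅}. -/

import Mathlib

variable {α : Type*} [DecidableEq α]

/-- Preferences (linear orders written as lists, most preferred first) on `A`. -/
def PrefOn (A : Finset α) : Set (List α) :=
  {l | l.Nodup ∧ l.toFinset = A}

/-- Restriction of a preference to a subset `T`. -/
def restrictPref (l : List α) (T : Finset α) : List α :=
  l.filter (fun a => decide (a ∈ T))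

/-- Arrow's single-peaked domain on `A`: for every triple `T ⊆ A` some `x ∈ T`
is never ranked last in the restriction of the domain to `T`. -/
def IsASPD (A : Finset α) (D : Set (List α)) : Prop :=
  D ⊆ PrefOn A ∧
    ∀ T : Finset α, T ⊆ A → T.card = 3 →
      ∃ x ∈ T, ∀ l ∈ D, (restrictPref l T).getLast? ≠ some x

/-- Maximal Arrow's single-peaked domain on `A`. -/
def IsMaximalASPD (A : Finset α) (D : Set (List α)) : Prop :=
  IsASPD A D ∧ ∀ l ∈ PrefOn A, l ∉ D → ¬ IsASPD A (insert l D)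

/-- The family of initial segments of the preferences of a domain: the regular
vine corresponding to a maximal Arrow's single-peaked domain. -/
def prefixFamily (D : Set (List α)) : Set (Finset α) :=
  {S | ∃ l ∈ D, ∃ k : ℕ, 1 ≤ k ∧ k ≤ l.length ∧ S = (l.take k).toFinset}

/-- `D` is `k`-rich: every alternative appears at each of the first `k`
(1-based) positions in some preference of `D`. -/
def IsKRich (A : Finset α) (D : Set (List α)) (k : ℕ) : Prop :=
  ∀ j : ℕ, 1 ≤ j → j ≤ k → ∀ a ∈ A, ∃ l ∈ D, l[j - 1]? = some a

/-!
The key fact is that in a maximal ASPD `D` the positions at which an alternative `a` is ranked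
form an initial segment: if `a` is ranked `(j+2)`-th by some voter, it is ranked `(j+1)`-th by
some voter. Deleting the bottom alternative `x` of a preference in `D` leaves a maximal ASPD on
`A ∖ {x}`, and every preference of `D` restricted to `A ∖ {x}` with `x` appended stays in `D`.
By induction this reduces to the case where `a` is ranked last; then a preference of `D` with a
different bottom alternative `y` exists, and moving `y` to the bottom of the given preference
moves `a` up by one.

Consequently `D` is `k`-rich iff for no `j < k` some alternative lies in the top `j` of every
preference, while the rank-`k` elements of the vine are the top-`k` sets, which have a common
element `x` iff `x` lies in the top `k` of every preference. Both sides are therefore the least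
`k` for which some alternative lies in the top `k` of every preference.
-/

section Preferences

variable {A S T : Finset α} {l w : List α} {x : α}

lemma restrictPref_append_singleton_of_mem (hx : x ∈ T) (l : List α) :
    restrictPref (l ++ [x]) T = restrictPref l T ++ [x] := by
  simp [restrictPref, hx]

lemma restrictPref_append_singleton_of_notMem (hx : x ∉ T) (l : List α) :
    restrictPref (l ++ [x]) T = restrictPref l T := by
  simp [restrictPref, hx]

lemma getLast?_restrictPref_append_singleton (hx : x ∈ T) (l : List α) :
    (restrictPref (l ++ [x]) T).getLast? = some x := by
  rw [restrictPref_append_singleton_of_mem hx, List.getLast?_concat]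

lemma restrictPref_restrictPref (l : List α) (h : T ⊆ S) :
    restrictPref (restrictPref l S) T = restrictPref l T := by
  simp only [restrictPref, List.filter_filter]
  refine List.filter_congr fun a _ => ?_
  by_cases ha : a ∈ T
  · simp [ha, h ha]
  · simp [ha]

lemma length_of_mem_prefOn (hl : l ∈ PrefOn A) : l.length = A.card := by
  rw [← hl.2, List.toFinset_card_of_nodup hl.1]

lemma restrictPref_mem_prefOn (hl : l ∈ PrefOn A) (hT : T ⊆ A) :
    restrictPref l T ∈ PrefOn T := by
  refine ⟨hl.1.filter _, ?_⟩
  ext a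
  simpa [restrictPref, ← hl.2] using fun haT => hT haT

lemma append_singleton_mem_prefOn_iff :
    w ++ [x] ∈ PrefOn A ↔ x ∈ A ∧ w ∈ PrefOn (A.erase x) := by
  simp only [PrefOn, Set.mem_ofPred_eq, List.nodup_append, List.nodup_singleton]
  constructor
  · rintro ⟨⟨hw, -, hxw⟩, rfl⟩
    have hx : x ∉ w := fun h => hxw x h x (List.mem_singleton_self x) rfl
    refine ⟨by simp, hw, ?_⟩
    ext a
    by_cases hax : a = x <;> simp [hax, hx]
  · rintro ⟨hxA, hw, hwA⟩
    have hx : x ∉ w := fun h => by simpa [hwA] using List.mem_toFinset.2 h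
    refine ⟨⟨hw, trivial, fun a ha b hb => ?_⟩, ?_⟩
    · rw [List.mem_singleton.1 hb]
      exact fun h => hx (h ▸ ha)
    · rw [List.toFinset_append, hwA]
      simpa using Finset.insert_erase hxA

end Preferences

section ASPD

variable {A : Finset α} {D : Set (List α)} {l w : List α} {x : α}

lemma isASPD_insert (hD : D ⊆ PrefOn A) (hl : l ∈ PrefOn A)
    (h : ∀ T ⊆ A, T.card = 3 → ∃ z ∈ T, (restrictPref l T).getLast? ≠ some z ∧
      ∀ m ∈ D, (restrictPref m T).getLast? ≠ some z) :
    IsASPD A (insert l D) := by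
  refine ⟨Set.insert_subset hl hD, fun T hT h3 => ?_⟩
  obtain ⟨z, hzT, hlz, hDz⟩ := h T hT h3
  exact ⟨z, hzT, Set.forall_mem_insert.2 ⟨hlz, hDz⟩⟩

namespace IsMaximalASPD

lemma mem_of_forall_triple (hD : IsMaximalASPD A D) (hl : l ∈ PrefOn A)
    (h : ∀ T ⊆ A, T.card = 3 → ∃ z ∈ T, (restrictPref l T).getLast? ≠ some z ∧
      ∀ m ∈ D, (restrictPref m T).getLast? ≠ some z) :
    l ∈ D := by
  by_contra hlD
  exact hD.2 l hl hlD (isASPD_insert hD.1.1 hl h)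

lemma mem_of_forall_triple_getLast? (hD : IsMaximalASPD A D) (hl : l ∈ PrefOn A)
    (h : ∀ T ⊆ A, T.card = 3 →
      ∃ m ∈ D, (restrictPref m T).getLast? = (restrictPref l T).getLast?) :
    l ∈ D := by
  refine hD.mem_of_forall_triple hl fun T hT h3 => ?_
  obtain ⟨z, hzT, hz⟩ := hD.1.2 T hT h3
  obtain ⟨m, hm, hml⟩ := h T hT h3
  exact ⟨z, hzT, hml ▸ hz m hm, hz⟩

lemma nonempty (hD : IsMaximalASPD A D) : D.Nonempty := by
  by_contra! hD0
  subst hD0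
  have hl : A.toList ∈ PrefOn A := ⟨A.nodup_toList, A.toList_toFinset⟩
  refine hD.2 _ hl (Set.notMem_empty _)
    (isASPD_insert (Set.empty_subset _) hl fun T _ h3 => ?_)
  obtain ⟨a, haT⟩ : T.Nonempty := Finset.card_pos.1 (by omega)
  obtain ⟨b, hbT, hba⟩ := T.exists_mem_ne (by omega) a
  by_cases hlast : (restrictPref A.toList T).getLast? = some a
  · exact ⟨b, hbT, by simpa [hlast] using hba.symm, by simp⟩
  · exact ⟨a, haT, hlast, by simp⟩

lemma restrictPref_erase_append_mem (hD : IsMaximalASPD A D) (hw : w ++ [x] ∈ D)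
    (hl : l ∈ D) : restrictPref l (A.erase x) ++ [x] ∈ D := by
  have hxA : x ∈ A := (append_singleton_mem_prefOn_iff.1 (hD.1.1 hw)).1
  refine hD.mem_of_forall_triple_getLast? (append_singleton_mem_prefOn_iff.2
    ⟨hxA, restrictPref_mem_prefOn (hD.1.1 hl) (A.erase_subset x)⟩) fun T hT _ => ?_
  by_cases hx : x ∈ T
  · exact ⟨w ++ [x], hw, by simp only [getLast?_restrictPref_append_singleton hx]⟩
  · refine ⟨l, hl, ?_⟩
    rw [restrictPref_append_singleton_of_notMem hx,
      restrictPref_restrictPref _ (Finset.subset_erase.2 ⟨hT, hx⟩)]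

lemma erase (hD : IsMaximalASPD A D) (hw : w ++ [x] ∈ D) :
    IsMaximalASPD (A.erase x) {v | v ++ [x] ∈ D} := by
  have hxA : x ∈ A := (append_singleton_mem_prefOn_iff.1 (hD.1.1 hw)).1
  refine ⟨⟨fun v hv => (append_singleton_mem_prefOn_iff.1 (hD.1.1 hv)).2,
    fun T hT h3 => ?_⟩, fun v hv hvD hasp => ?_⟩
  · obtain ⟨hTA, hxT⟩ := Finset.subset_erase.1 hT
    obtain ⟨z, hzT, hz⟩ := hD.1.2 T hTA h3
    refine ⟨z, hzT, fun v hv => ?_⟩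
    rw [← restrictPref_append_singleton_of_notMem hxT]
    exact hz _ hv
  · refine hvD (hD.mem_of_forall_triple (append_singleton_mem_prefOn_iff.2 ⟨hxA, hv⟩)
      fun T hT h3 => ?_)
    by_cases hx : x ∈ T
    · obtain ⟨z, hzT, hz⟩ := hD.1.2 T hT h3
      have hzx : x ≠ z := by
        rintro rfl
        exact hz _ hw (getLast?_restrictPref_append_singleton hx w)
      exact ⟨z, hzT, by simpa [getLast?_restrictPref_append_singleton hx] using hzx, hz⟩
    · have hTx : T ⊆ A.erase x := Finset.subset_erase.2 ⟨hT, hx⟩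
      obtain ⟨z, hzT, hz⟩ := hasp.2 T hTx h3
      refine ⟨z, hzT, ?_, fun m hm => ?_⟩
      · rw [restrictPref_append_singleton_of_notMem hx]
        exact hz v (Set.mem_insert _ _)
      · rw [← restrictPref_restrictPref m hTx]
        exact hz _ (Set.mem_insert_of_mem _ (hD.restrictPref_erase_append_mem hw hm))

lemma exists_append_singleton_mem_ne (hD : IsMaximalASPD A D) (hA : 2 ≤ A.card) (x : α) :
    ∃ w y, y ≠ x ∧ w ++ [y] ∈ D := by
  by_contra! hlast
  have hne : ∀ m ∈ D, m ≠ [] := fun m hm h => by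
    simp [h, ← length_of_mem_prefOn (hD.1.1 hm)] at hA
  have hlast_eq : ∀ m ∈ D, ∃ m', m = m' ++ [x] := fun m hm => by
    obtain ⟨m', y, rfl⟩ := (m.eq_nil_or_concat').resolve_left (hne m hm)
    obtain rfl : y = x := not_not.1 fun h => hlast m' y h hm
    exact ⟨m', rfl⟩
  obtain ⟨l, hl⟩ := hD.nonempty
  obtain ⟨l', rfl⟩ := hlast_eq l hl
  obtain ⟨v, u, rfl⟩ := (l'.eq_nil_or_concat').resolve_left fun h => by
    simp [h, ← length_of_mem_prefOn (hD.1.1 hl)] at hA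
  have hlA := hD.1.1 hl
  have hux : u ≠ x := by
    rintro rfl
    have := hlA.1
    simp [List.nodup_append] at this
  -- swapping the last two alternatives yields a preference that maximality puts into `D`
  have hperm : (v ++ [u] ++ [x]).Perm (v ++ [x] ++ [u]) := by
    simpa using (List.Perm.swap x u []).append_left v
  have hswapA : v ++ [x] ++ [u] ∈ PrefOn A :=
    ⟨hperm.nodup_iff.1 hlA.1, List.toFinset_eq_of_perm _ _ hperm ▸ hlA.2⟩
  refine hlast _ u hux (hD.mem_of_forall_triple hswapA fun T hT h3 => ?_)
  by_cases hux_mem : u ∈ T ∧ x ∈ T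
  · -- the third alternative of `T` is ranked last neither by the swapped order nor by `D`
    obtain ⟨z, hz⟩ : ((T.erase u).erase x).Nonempty := by
      rw [← Finset.card_pos, Finset.card_erase_of_mem (Finset.mem_erase.2 ⟨hux.symm, hux_mem.2⟩),
        Finset.card_erase_of_mem hux_mem.1]
      omega
    simp only [Finset.mem_erase] at hz
    refine ⟨z, hz.2.2, ?_, fun m hm => ?_⟩
    · rw [getLast?_restrictPref_append_singleton hux_mem.1]
      simpa using Ne.symm hz.2.1
    · obtain ⟨m', rfl⟩ := hlast_eq m hm
      rw [getLast?_restrictPref_append_singleton hux_mem.2]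
      simpa using Ne.symm hz.1
  · obtain ⟨z, hzT, hz⟩ := hD.1.2 T hT h3
    have hrestr : restrictPref (v ++ [x] ++ [u]) T = restrictPref (v ++ [u] ++ [x]) T := by
      rcases not_and_or.1 hux_mem with hu | hx
      · by_cases hx : x ∈ T <;> simp [restrictPref, hu, hx]
      · by_cases hu : u ∈ T <;> simp [restrictPref, hu, hx]
    exact ⟨z, hzT, hrestr ▸ hz _ hl, hz⟩

lemma exists_getElem?_of_succ (hD : IsMaximalASPD A D) (hl : l ∈ D) {a : α} {j : ℕ}
    (ha : l[j + 1]? = some a) : ∃ l' ∈ D, l'[j]? = some a := by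
  induction l using List.reverseRecOn generalizing A D with
  | nil => simp at ha
  | append_singleton w x ih =>
    by_cases hj : j + 1 < w.length
    · rw [List.getElem?_append_left hj] at ha
      obtain ⟨w', hw', hw'a⟩ := ih (hD.erase hl) hl ha
      refine ⟨w' ++ [x], hw', ?_⟩
      rwa [List.getElem?_append_left (List.getElem?_eq_some_iff.1 hw'a).1]
    · obtain ⟨hjw, rfl⟩ : w.length = j + 1 ∧ x = a := by
        have hlt := (List.getElem?_eq_some_iff.1 ha).1
        simp only [List.length_append, List.length_singleton] at hlt
        have hjw : w.length = j + 1 := by omega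
        rw [← hjw, List.getElem?_concat_length] at ha
        exact ⟨hjw, Option.some.inj ha⟩
      have hlA := hD.1.1 hl
      have hA : 2 ≤ A.card := by
        rw [← length_of_mem_prefOn hlA]
        simp [hjw]
      obtain ⟨v, y, hyx, hv⟩ := hD.exists_append_singleton_mem_ne hA x
      have hxy : x ∈ A.erase y :=
        Finset.mem_erase.2 ⟨hyx.symm, (append_singleton_mem_prefOn_iff.1 hlA).1⟩
      have hlen : (restrictPref w (A.erase y)).length = j := by
        have := length_of_mem_prefOn (restrictPref_mem_prefOn hlA (A.erase_subset y))
        rw [restrictPref_append_singleton_of_mem hxy, Finset.card_erase_of_mem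
          (append_singleton_mem_prefOn_iff.1 (hD.1.1 hv)).1, ← length_of_mem_prefOn hlA] at this
        simp only [List.length_append, List.length_singleton] at this
        omega
      refine ⟨_, hD.restrictPref_erase_append_mem hv hl, ?_⟩
      rw [restrictPref_append_singleton_of_mem hxy, ← hlen]
      simp

lemma exists_getElem?_of_le (hD : IsMaximalASPD A D) (hl : l ∈ D) {a : α} {i j : ℕ}
    (hij : i ≤ j) (ha : l[j]? = some a) : ∃ l' ∈ D, l'[i]? = some a := by
  induction j, hij using Nat.le_induction generalizing l with
  | base => exact ⟨l, hl, ha⟩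
  | succ j _ ih =>
    obtain ⟨l', hl', ha'⟩ := hD.exists_getElem?_of_succ hl ha
    exact ih hl' ha'

lemma exists_getElem?_eq_iff_exists_notMem_take (hD : IsMaximalASPD A D) {a : α} (ha : a ∈ A)
    (j : ℕ) : (∃ l ∈ D, l[j]? = some a) ↔ ∃ l ∈ D, a ∉ l.take j := by
  constructor
  · rintro ⟨l, hl, hla⟩
    obtain ⟨hj, rfl⟩ := List.getElem?_eq_some_iff.1 hla
    refine ⟨l, hl, ?_⟩
    rw [List.mem_take_iff_idxOf_lt (List.getElem_mem hj), (hD.1.1 hl).1.idxOf_getElem]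
    exact lt_irrefl j
  · rintro ⟨l, hl, hla⟩
    have hal : a ∈ l := by rw [← List.mem_toFinset, (hD.1.1 hl).2]; exact ha
    rw [List.mem_take_iff_idxOf_lt hal, not_lt] at hla
    exact hD.exists_getElem?_of_le hl hla (List.getElem?_idxOf hal)

lemma isKRich_iff (hD : IsMaximalASPD A D) (k : ℕ) :
    IsKRich A D k ↔ ∀ j < k, ¬ ∃ a ∈ A, ∀ l ∈ D, a ∈ l.take j := by
  have hshift : IsKRich A D k ↔ ∀ j < k, ∀ a ∈ A, ∃ l ∈ D, l[j]? = some a :=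
    ⟨fun h j hj => by simpa using h (j + 1) (by omega) (by omega),
      fun h j hj1 hjk => h (j - 1) (by omega)⟩
  rw [hshift]
  refine forall₂_congr fun j _ => ?_
  push Not
  exact forall₂_congr fun a ha => hD.exists_getElem?_eq_iff_exists_notMem_take ha j

end IsMaximalASPD

end ASPD

lemma exists_forall_mem_prefixFamily_iff {A : Finset α} {D : Set (List α)}
    (hD : D ⊆ PrefOn A) (hne : D.Nonempty) {k : ℕ} (hk : 1 ≤ k) (hkA : k ≤ A.card) :
    (∃ x, ∀ S ∈ prefixFamily D, S.card = k → x ∈ S) ↔ ∃ x ∈ A, ∀ l ∈ D, x ∈ l.take k := by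
  have hcard : ∀ l ∈ D, ∀ i ≤ A.card, (l.take i).toFinset.card = i := fun l hl i hi => by
    rw [List.toFinset_card_of_nodup ((hD hl).1.sublist (List.take_sublist i l)),
      List.length_take, length_of_mem_prefOn (hD hl)]
    omega
  constructor
  · rintro ⟨x, hx⟩
    have hxk : ∀ l ∈ D, x ∈ l.take k := fun l hl => List.mem_toFinset.1 <| hx _
      ⟨l, hl, k, hk, (length_of_mem_prefOn (hD hl)).symm ▸ hkA, rfl⟩ (hcard l hl k hkA)
    obtain ⟨l, hl⟩ := hne
    refine ⟨x, ?_, hxk⟩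
    rw [← (hD hl).2, List.mem_toFinset]
    exact List.mem_of_mem_take (hxk l hl)
  · rintro ⟨x, -, hx⟩
    refine ⟨x, ?_⟩
    rintro S ⟨l, hl, i, -, hil, rfl⟩ hS
    rw [hcard l hl i ((length_of_mem_prefOn (hD hl)) ▸ hil)] at hS
    subst hS
    exact List.mem_toFinset.2 (hx l hl)

lemma Nat.sSup_setOf_forall_lt_not_eq_sInf {P : ℕ → Prop} {n : ℕ} (h0 : ¬ P 0) (hn : P n) :
    sSup {k | ∀ j < k, ¬ P j} = sInf {k | 1 ≤ k ∧ k ≤ n ∧ P k} := by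
  classical
  have hex : ∃ k, P k := ⟨n, hn⟩
  have hgreatest : IsGreatest {k | ∀ j < k, ¬ P j} (Nat.find hex) :=
    ⟨fun j hj => Nat.find_min hex hj,
      fun k hk => not_lt.1 fun hlt => hk _ hlt (Nat.find_spec hex)⟩
  have hleast : IsLeast {k | 1 ≤ k ∧ k ≤ n ∧ P k} (Nat.find hex) :=
    ⟨⟨Nat.one_le_iff_ne_zero.2 fun h => h0 (h ▸ Nat.find_spec hex), Nat.find_min' hex hn,
      Nat.find_spec hex⟩, fun k hk => Nat.find_min' hex hk.2.2⟩
  rw [hgreatest.csSup_eq, hleast.csInf_eq]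

/-- The richness of a maximal Arrow's single-peaked domain (the largest `k`
such that the domain is `k`-rich) equals the least `k` such that the rank-`k`
elements of the corresponding regular vine have a common element. -/
theorem richness_eq_vine_intersection (A : Finset α) (D : Set (List α))
    (hD : IsMaximalASPD A D) :
    sSup {k : ℕ | IsKRich A D k} =
      sInf {k : ℕ | 1 ≤ k ∧ k ≤ A.card ∧
        ∃ x : α, ∀ S ∈ prefixFamily D, S.card = k → x ∈ S} := by
  set P : ℕ → Prop := fun j => ∃ x ∈ A, ∀ l ∈ D, x ∈ l.take j
  obtain ⟨l, hl⟩ := hD.nonempty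
  have hrich : {k | IsKRich A D k} = {k | ∀ j < k, ¬ P j} := Set.ext hD.isKRich_iff
  have hvine : {k | 1 ≤ k ∧ k ≤ A.card ∧ ∃ x : α, ∀ S ∈ prefixFamily D, S.card = k → x ∈ S} =
      {k | 1 ≤ k ∧ k ≤ A.card ∧ P k} :=
    Set.ext fun k => and_congr_right fun hk => and_congr_right fun hkA =>
      exists_forall_mem_prefixFamily_iff hD.1.1 ⟨l, hl⟩ hk hkA
  rw [hrich, hvine]
  obtain rfl | ⟨x, hx⟩ := A.eq_empty_or_nonempty
  · simp [P]
  · refine Nat.sSup_setOf_forall_lt_not_eq_sInf (fun ⟨x, _, hx⟩ => by simpa using hx l hl)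
      ⟨x, hx, fun l hl => ?_⟩
    rw [List.take_of_length_le (length_of_mem_prefOn (hD.1.1 hl)).le, ← List.mem_toFinset,
      (hD.1.1 hl).2]
    exact hx
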